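/- arXiv:1805.08491 — 6 statements merged into one kernel-verified Lean document; each statement's English description precedes it below -/
import Mathlib

section
/- Let 𝔤 be an n-dimensional real nilpotent Lie algebra with a nice basis, structure constants c_{ijk}, index set I_Δ and root matrix M_Δ. Then every derivation of 𝔤 has trace zero if and only if the all-ones vector (1,…,1) ∈ ℝⁿ lies in the real span of the rows of M_Δ (equivalently, of the columns of the transpose of M_Δ). -/
open scoped BigOperators

/-- The bilinear bracket on `Fin n → ℝ` determined by structure constants `c`. -/
def bracket {n : ℕ} (c : Fin n → Fin n → Fin n → ℝ) (x y : Fin n → ℝ) : Fin n → ℝ :=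
  fun k => ∑ i, ∑ j, x i * y j * c i j k

/-- `c` is the family of structure constants of a nilpotent Lie algebra for which
the standard basis of `Fin n → ℝ` is a nice basis. -/
structure IsNiceNilpotent {n : ℕ} (c : Fin n → Fin n → Fin n → ℝ) : Prop where
  skew : ∀ i j k, c i j k = - c j i k
  jacobi : ∀ x y z : Fin n → ℝ,
    bracket c (bracket c x y) z + bracket c (bracket c y z) x + bracket c (bracket c z x) y = 0
  nilpotent : ∃ N : ℕ, ∀ (v : Fin N → Fin n → ℝ) (w : Fin n → ℝ),
    (List.ofFn v).foldr (bracket c) w = 0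
  nice_k : ∀ i j k k', c i j k ≠ 0 → c i j k' ≠ 0 → k = k'
  nice_j : ∀ i j j' k, c i j k ≠ 0 → c i j' k ≠ 0 → j = j'

/-- Entry `h` of the row of the root matrix indexed by a bracket `[e i, e j] = c i j k • e k`:
the row vector `- eⁱ - eʲ + eᵏ`. -/
def rootRow {n : ℕ} (i j k h : Fin n) : ℤ :=
  (if k = h then 1 else 0) - (if i = h then 1 else 0) - (if j = h then 1 else 0)

/-- The mod 2 reduction of the root matrix entries. -/
def rootRow2 {n : ℕ} (i j k h : Fin n) : ZMod 2 := ((rootRow i j k h : ℤ) : ZMod 2)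

/-- The Ricci operator of the scalar product with matrix `g` in the nice basis,
`ric_h^k = ¼ g^{im} g^{lp} g_{hq} c_{ilk} c_{mpq} − ½ g^{km} g^{jp} g_{iq} c_{hji} c_{mpq}`. -/
noncomputable def Ric {n : ℕ} (c : Fin n → Fin n → Fin n → ℝ)
    (g : Matrix (Fin n) (Fin n) ℝ) : Matrix (Fin n) (Fin n) ℝ :=
  Matrix.of fun h k =>
    (1/4 : ℝ) * (∑ i, ∑ m, ∑ l, ∑ p, ∑ q,
        g⁻¹ i m * g⁻¹ l p * g h q * c i l k * c m p q)
    - (1/2 : ℝ) * (∑ m, ∑ j, ∑ p, ∑ i, ∑ q,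
        g⁻¹ k m * g⁻¹ j p * g i q * c h j i * c m p q)

/-- Condition (E): the Ricci operator equals `½ id`. -/
def EinsteinE {n : ℕ} (c : Fin n → Fin n → Fin n → ℝ)
    (g : Matrix (Fin n) (Fin n) ℝ) : Prop :=
  Ric c g = (1/2 : ℝ) • (1 : Matrix (Fin n) (Fin n) ℝ)

/-- The matrix of the `σ`-diagonal bilinear form `∑ᵢ gᵢ eⁱ ⊗ e^{σ i}`. -/
def sigmaDiag {n : ℕ} (σ : Equiv.Perm (Fin n)) (gv : Fin n → ℝ) :
    Matrix (Fin n) (Fin n) ℝ :=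
  Matrix.of fun i j => if σ i = j then gv i else 0

/-- `σ` is a diagram involution: it squares to the identity and preserves the
set of nonzero structure constants. -/
def IsDiagramInvolution {n : ℕ} (c : Fin n → Fin n → Fin n → ℝ)
    (σ : Equiv.Perm (Fin n)) : Prop :=
  (∀ i, σ (σ i) = i) ∧ ∀ i j k, c i j k ≠ 0 → c (σ i) (σ j) (σ k) ≠ 0

/-- The mod 2 root matrix `M_{Δ,2}` is surjective: every vector indexed by the brackets
`I_Δ` is of the form `M_{Δ,2} s`. -/
def SurjectiveType {n : ℕ} (c : Fin n → Fin n → Fin n → ℝ) : Prop :=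
  ∀ y : Fin n → Fin n → Fin n → ZMod 2, ∃ s : Fin n → ZMod 2,
    ∀ i j k, i < j → c i j k ≠ 0 → y i j k = ∑ h, rootRow2 i j k h * s h
/-! Evaluating a derivation `D` on `[eᵢ, eⱼ] = c i j k • eₖ` and using niceness to isolate the
`k`-th coordinate shows that its diagonal `d` satisfies `d k = d i + d j` whenever `c i j k ≠ 0`,
i.e. `M_Δ d = 0`; conversely every diagonal matrix with `M_Δ d = 0` is a derivation. So all
derivations are traceless iff `(1, …, 1)` is orthogonal to `ker M_Δ`, which is the row space of
`M_Δ` by duality. -/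

open Matrix

theorem mem_span_iff_forall_dotProduct_eq_zero {K ι : Type*} [Field K] [Fintype ι]
    [DecidableEq ι] (S : Set (ι → K)) (v : ι → K) :
    v ∈ Submodule.span K S ↔ ∀ s : ι → K, (∀ r ∈ S, r ⬝ᵥ s = 0) → v ⬝ᵥ s = 0 := by
  constructor
  · intro hv s hS
    induction hv using Submodule.span_induction with
    | mem r hr => exact hS r hr
    | zero => exact zero_dotProduct s
    | add x y _ _ hx hy => rw [add_dotProduct, hx, hy, add_zero]
    | smul a x _ hx => rw [smul_dotProduct, hx, smul_zero]
  · intro h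
    rw [← Subspace.forall_mem_dualAnnihilator_apply_eq_zero_iff]
    intro φ hφ
    have hφ_dot : ∀ r, φ r = r ⬝ᵥ fun i => φ (Pi.single i 1) := by
      intro r
      conv_lhs => rw [← Finset.univ_sum_single r]
      rw [map_sum]
      refine Finset.sum_congr rfl fun i _ => ?_
      rw [← smul_eq_mul, ← map_smul, ← Pi.single_smul, smul_eq_mul, mul_one]
    rw [Submodule.mem_dualAnnihilator] at hφ
    rw [hφ_dot]
    exact h _ fun r hr => (hφ_dot r).symm.trans (hφ r (Submodule.subset_span hr))

section

variable {n : ℕ} {c : Fin n → Fin n → Fin n → ℝ}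

def IsDerivation (c : Fin n → Fin n → Fin n → ℝ) (D : Matrix (Fin n) (Fin n) ℝ) : Prop :=
  ∀ x y : Fin n → ℝ, D *ᵥ bracket c x y = bracket c (D *ᵥ x) y + bracket c x (D *ᵥ y)

def IsAdditiveWeight (c : Fin n → Fin n → Fin n → ℝ) (s : Fin n → ℝ) : Prop :=
  ∀ i j k, c i j k ≠ 0 → s k = s i + s j

def rootMatrixRows (c : Fin n → Fin n → Fin n → ℝ) : Set (Fin n → ℝ) :=
  {r | ∃ i j k : Fin n, i < j ∧ c i j k ≠ 0 ∧ r = fun h => ((rootRow i j k h : ℤ) : ℝ)}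

theorem bracket_single_one_left (i : Fin n) (y : Fin n → ℝ) :
    bracket c (Pi.single i 1) y = fun k => ∑ j, y j * c i j k := by
  funext k
  simp [bracket, Pi.single_apply, ite_mul]

theorem bracket_single_one_right (j : Fin n) (x : Fin n → ℝ) :
    bracket c x (Pi.single j 1) = fun k => ∑ i, x i * c i j k := by
  funext k
  simp [bracket, Pi.single_apply, ite_mul, mul_ite]

theorem bracket_single_one_single_one (i j : Fin n) :
    bracket c (Pi.single i 1) (Pi.single j 1) = fun k => c i j k := by
  simp [bracket_single_one_left, Pi.single_apply, ite_mul]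

theorem isDerivation_diagonal {s : Fin n → ℝ} (hs : IsAdditiveWeight c s) :
    IsDerivation c (diagonal s) := by
  intro x y
  funext k
  simp only [mulVec_diagonal, Pi.add_apply, bracket, Finset.mul_sum, ← Finset.sum_add_distrib]
  refine Finset.sum_congr rfl fun i _ => Finset.sum_congr rfl fun j _ => ?_
  by_cases h : c i j k = 0
  · simp [h]
  · rw [hs i j k h]
    ring

namespace IsNiceNilpotent

theorem eq_of_ne_zero_left (hc : IsNiceNilpotent c) {i i' j k : Fin n} (h : c i j k ≠ 0)
    (h' : c i' j k ≠ 0) : i = i' :=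
  hc.nice_j j i i' k (by rwa [hc.skew, neg_ne_zero]) (by rwa [hc.skew, neg_ne_zero])

theorem diag_eq_add_of_isDerivation (hc : IsNiceNilpotent c) {D : Matrix (Fin n) (Fin n) ℝ}
    (hD : IsDerivation c D) {i j k : Fin n} (h : c i j k ≠ 0) : D k k = D i i + D j j := by
  have hout : (D *ᵥ fun m => c i j m) k = D k k * c i j k := by
    rw [mulVec, dotProduct]
    refine Finset.sum_eq_single k (fun m _ hm => ?_) (by simp)
    rw [not_ne_iff.mp fun hm' => hm (hc.nice_k i j m k hm' h), mul_zero]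
  have hleft : ∑ a, D a i * c a j k = D i i * c i j k := by
    refine Finset.sum_eq_single i (fun a _ ha => ?_) (by simp)
    rw [not_ne_iff.mp fun ha' => ha (hc.eq_of_ne_zero_left ha' h), mul_zero]
  have hright : ∑ b, D b j * c i b k = D j j * c i j k := by
    refine Finset.sum_eq_single j (fun b _ hb => ?_) (by simp)
    rw [not_ne_iff.mp fun hb' => hb (hc.nice_j i b j k hb' h), mul_zero]
  have key := congrFun (hD (Pi.single i 1) (Pi.single j 1)) k
  rw [bracket_single_one_single_one, mulVec_single_one, mulVec_single_one,
    bracket_single_one_left, bracket_single_one_right] at key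
  simp only [Pi.add_apply, col_apply, hout, hleft, hright] at key
  exact mul_right_cancel₀ h (by rw [key, add_mul])

theorem forall_isDerivation_trace_eq_zero_iff (hc : IsNiceNilpotent c) :
    (∀ D, IsDerivation c D → D.trace = 0) ↔ ∀ s, IsAdditiveWeight c s → ∑ h, s h = 0 := by
  constructor
  · intro htr s hs
    simpa using htr _ (isDerivation_diagonal hs)
  · intro hsum D hD
    exact hsum D.diag fun i j k h => hc.diag_eq_add_of_isDerivation hD h

end IsNiceNilpotent

theorem rootRow_dotProduct (i j k : Fin n) (s : Fin n → ℝ) :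
    (fun h => ((rootRow i j k h : ℤ) : ℝ)) ⬝ᵥ s = s k - s i - s j := by
  simp [rootRow, dotProduct, sub_mul, ite_mul, Finset.sum_sub_distrib]

theorem isAdditiveWeight_iff_forall_rootMatrixRows (hskew : ∀ i j k, c i j k = -c j i k)
    (s : Fin n → ℝ) :
    IsAdditiveWeight c s ↔ ∀ r ∈ rootMatrixRows c, r ⬝ᵥ s = 0 := by
  constructor
  · rintro hs r ⟨i, j, k, -, hijk, rfl⟩
    rw [rootRow_dotProduct, hs i j k hijk]
    ring
  · intro hrows
    have hlt : ∀ i j k, i < j → c i j k ≠ 0 → s k = s i + s j := by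
      intro i j k hij hijk
      have := hrows _ ⟨i, j, k, hij, hijk, rfl⟩
      rw [rootRow_dotProduct] at this
      linarith
    intro i j k hijk
    rcases lt_trichotomy i j with hij | rfl | hji
    · exact hlt i j k hij hijk
    · exact absurd (by linarith [hskew i i k]) hijk
    · rw [add_comm]
      exact hlt j i k hji (by rw [hskew]; exact neg_ne_zero.mpr hijk)

end

/-- Every derivation of a nice nilpotent Lie algebra is traceless if and only if the
all-ones vector lies in the real span of the rows of the root matrix. -/
theorem derivations_traceless_iff_ones_in_rowSpan
    (n : ℕ) (c : Fin n → Fin n → Fin n → ℝ) (hc : IsNiceNilpotent c) :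
    (∀ D : Matrix (Fin n) (Fin n) ℝ,
        (∀ x y : Fin n → ℝ,
          D.mulVec (bracket c x y) = bracket c (D.mulVec x) y + bracket c x (D.mulVec y)) →
        D.trace = 0) ↔
      (fun _ : Fin n => (1 : ℝ)) ∈
        Submodule.span ℝ {r : Fin n → ℝ |
          ∃ i j k : Fin n, i < j ∧ c i j k ≠ 0 ∧ r = fun h => ((rootRow i j k h : ℤ) : ℝ)} := by
  change (∀ D, IsDerivation c D → D.trace = 0) ↔ _ ∈ Submodule.span ℝ (rootMatrixRows c)
  rw [hc.forall_isDerivation_trace_eq_zero_iff, mem_span_iff_forall_dotProduct_eq_zero]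
  refine forall_congr' fun s => imp_congr (isAdditiveWeight_iff_forall_rootMatrixRows hc.skew s) ?_
  simp only [dotProduct, one_mul]
end

section
/- Let 𝔤 be an n-dimensional real nilpotent Lie algebra with a nice basis, structure constants c_I (I ∈ I_Δ), root matrix M_Δ, and let σ be a diagram involution. Then 𝔤 admits a σ-diagonal metric satisfying condition (E) (ric = ½ id) if and only if there exist a vector X = (x_I) ∈ ℝ^{I_Δ} and nonzero reals g₁,…,gₙ such that: (i) M_Δᵀ X = (1,…,1) ∈ ℝⁿ; (ii) x_I/(c_I c̃_I) = g_k/(g_i g_j) for every I = {{i,j},k} ∈ I_Δ; (iii) g_{σ(i)} = g_i for all i. Moreover, when (i)–(iii) hold, the metric g = ∑ᵢ gᵢ eⁱ⊗e^{σ(i)} itself satisfies ric = ½ id. -/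
open scoped BigOperators

/-!
For a `σ`-diagonal metric the inverse is again `σ`-diagonal, so the Ricci operator is computed
entry by entry. Niceness, together with the fact that `σ` preserves the nonzero structure
constants, kills every off-diagonal entry, and the `k`-th diagonal entry becomes a combination
of the numbers `Y_{ijk} = c_{ijk} c̃_{ijk} g_k / (g_i g_j)`. These are symmetric in `i, j`, so
`Y_{ijk} = x_{ijk} + x_{jik}` with `x` supported on `i < j`, and the diagonal entry is exactly
`½ (M_Δᵀ X)_k`. Condition (E) is therefore equivalent to (i).
-/

lemma IsNiceNilpotent.eq_of_ne_zero_left_s2 {n : ℕ} {c : Fin n → Fin n → Fin n → ℝ}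
    (hc : IsNiceNilpotent c) {h h' j i : Fin n} (h₁ : c h j i ≠ 0) (h₂ : c h' j i ≠ 0) :
    h = h' :=
  hc.nice_j j h h' i (by rw [hc.skew]; exact neg_ne_zero.mpr h₁)
    (by rw [hc.skew]; exact neg_ne_zero.mpr h₂)

lemma IsDiagramInvolution.ne_zero_of_map_ne_zero {n : ℕ} {c : Fin n → Fin n → Fin n → ℝ}
    {σ : Equiv.Perm (Fin n)} (hσ : IsDiagramInvolution c σ) {i j k : Fin n}
    (h : c (σ i) (σ j) (σ k) ≠ 0) : c i j k ≠ 0 := by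
  simpa only [hσ.1] using hσ.2 _ _ _ h

section SigmaDiag

variable {n : ℕ} {σ : Equiv.Perm (Fin n)}

lemma sigmaDiag_mul_sigmaDiag (hσ : ∀ i, σ (σ i) = i) (g g' : Fin n → ℝ) :
    sigmaDiag σ g * sigmaDiag σ g' = Matrix.diagonal fun i => g i * g' (σ i) := by
  ext i k
  simp only [Matrix.mul_apply, sigmaDiag, Matrix.of_apply, ite_mul, zero_mul,
    Finset.sum_ite_eq, Finset.mem_univ, if_true, hσ, Matrix.diagonal_apply]
  rw [mul_ite, mul_zero]

lemma inv_sigmaDiag (hσ : ∀ i, σ (σ i) = i) {g : Fin n → ℝ} (hg : ∀ i, g i ≠ 0)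
    (hgσ : ∀ i, g (σ i) = g i) : (sigmaDiag σ g)⁻¹ = sigmaDiag σ g⁻¹ := by
  refine Matrix.inv_eq_right_inv ?_
  rw [sigmaDiag_mul_sigmaDiag hσ, ← Matrix.diagonal_one]
  congr 1
  ext i
  rw [Pi.inv_apply, hgσ, mul_inv_cancel₀ (hg i)]

end SigmaDiag

section Ricci

variable {n : ℕ} {c : Fin n → Fin n → Fin n → ℝ} {σ : Equiv.Perm (Fin n)} {g : Fin n → ℝ}

noncomputable def ricciCoeff (c : Fin n → Fin n → Fin n → ℝ) (σ : Equiv.Perm (Fin n))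
    (g : Fin n → ℝ) (i j k : Fin n) : ℝ :=
  c i j k * c (σ i) (σ j) (σ k) * g k / (g i * g j)

lemma ric_sigmaDiag_apply (hσ : ∀ i, σ (σ i) = i) (hg : ∀ i, g i ≠ 0)
    (hgσ : ∀ i, g (σ i) = g i) (h k : Fin n) :
    Ric c (sigmaDiag σ g) h k =
      1/4 * ∑ i, ∑ l, (g i)⁻¹ * (g l)⁻¹ * g h * c i l k * c (σ i) (σ l) (σ h)
      - 1/2 * ∑ j, ∑ i, (g k)⁻¹ * (g j)⁻¹ * g i * c h j i * c (σ k) (σ j) (σ i) := by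
  rw [Ric, inv_sigmaDiag hσ hg hgσ]
  simp only [Matrix.of_apply, sigmaDiag, Pi.inv_apply, ite_mul, zero_mul, mul_ite, mul_zero,
    Finset.sum_ite_irrel, Finset.sum_const_zero, Finset.sum_ite_eq, Finset.mem_univ, if_true]

lemma ric_sigmaDiag (hc : IsNiceNilpotent c) (hσ : IsDiagramInvolution c σ)
    (hg : ∀ i, g i ≠ 0) (hgσ : ∀ i, g (σ i) = g i) :
    Ric c (sigmaDiag σ g) = Matrix.diagonal fun k =>
      1/4 * ∑ i, ∑ l, ricciCoeff c σ g i l k - 1/2 * ∑ j, ∑ i, ricciCoeff c σ g k j i := by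
  ext h k
  rw [ric_sigmaDiag_apply hσ.1 hg hgσ, Matrix.diagonal_apply]
  split_ifs with hhk
  · subst hhk
    simp only [ricciCoeff]
    congr 2 <;> exact Finset.sum_congr rfl fun _ _ => Finset.sum_congr rfl fun _ _ => by ring
  · have quarter_terms_zero : ∀ i l, c i l k * c (σ i) (σ l) (σ h) = 0 := fun i l => by
      by_contra hne
      exact hhk (hc.nice_k i l h k (hσ.ne_zero_of_map_ne_zero (right_ne_zero_of_mul hne))
        (left_ne_zero_of_mul hne))
    have half_terms_zero : ∀ j i, c h j i * c (σ k) (σ j) (σ i) = 0 := fun j i => by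
      by_contra hne
      exact hhk (hc.eq_of_ne_zero_left_s2 (left_ne_zero_of_mul hne)
        (hσ.ne_zero_of_map_ne_zero (right_ne_zero_of_mul hne)))
    simp only [mul_assoc, quarter_terms_zero, half_terms_zero, mul_zero, Finset.sum_const_zero,
      sub_zero]

lemma ricciCoeff_swap (hc : IsNiceNilpotent c) (i j k : Fin n) :
    ricciCoeff c σ g i j k = ricciCoeff c σ g j i k := by
  simp only [ricciCoeff, hc.skew i j k, hc.skew (σ i) (σ j) (σ k)]
  ring

lemma ricciCoeff_self (hc : IsNiceNilpotent c) (i k : Fin n) : ricciCoeff c σ g i i k = 0 := by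
  have hcii : c i i k = 0 := by linarith [hc.skew i i k]
  simp only [ricciCoeff, hcii, zero_mul, zero_div]

section RootCoefficients

variable {X : Fin n → Fin n → Fin n → ℝ}
  (hX0 : ∀ i j k : Fin n, ¬(i < j ∧ c i j k ≠ 0) → X i j k = 0)
  (hX : ∀ i j k : Fin n, i < j → c i j k ≠ 0 →
    X i j k * (g i * g j) = c i j k * c (σ i) (σ j) (σ k) * g k)
include hX0 hX

lemma ricciCoeff_eq_of_lt (hg : ∀ i, g i ≠ 0) {i j : Fin n} (hij : i < j) (k : Fin n) :
    ricciCoeff c σ g i j k = X i j k := by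
  by_cases hcz : c i j k = 0
  · rw [hX0 i j k (by tauto), ricciCoeff, hcz, zero_mul, zero_mul, zero_div]
  · rw [ricciCoeff, ← hX i j k hij hcz, mul_div_cancel_right₀ _ (mul_ne_zero (hg i) (hg j))]

lemma ricciCoeff_eq_add_swap (hc : IsNiceNilpotent c) (hg : ∀ i, g i ≠ 0) (i j k : Fin n) :
    ricciCoeff c σ g i j k = X i j k + X j i k := by
  rcases lt_trichotomy i j with hij | rfl | hij
  · rw [ricciCoeff_eq_of_lt hX0 hX hg hij, hX0 j i k (by simp [hij.not_gt]), add_zero]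
  · rw [ricciCoeff_self hc, hX0 i i k (by simp), add_zero]
  · rw [ricciCoeff_swap hc, ricciCoeff_eq_of_lt hX0 hX hg hij, hX0 i j k (by simp [hij.not_gt]),
      zero_add]

end RootCoefficients

end Ricci

lemma sum_mul_rootRow {n : ℕ} (X : Fin n → Fin n → Fin n → ℝ) (h : Fin n) :
    ∑ i, ∑ j, ∑ k, X i j k * ((rootRow i j k h : ℤ) : ℝ) =
      ∑ i, ∑ j, X i j h - ∑ j, ∑ k, X h j k - ∑ i, ∑ k, X i h k := by
  simp only [rootRow, Int.cast_sub, Int.cast_ite, Int.cast_one, Int.cast_zero,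
    mul_sub, mul_ite, mul_one, mul_zero, Finset.sum_sub_distrib,
    Finset.sum_ite_irrel, Finset.sum_const_zero, Finset.sum_ite_eq',
    Finset.mem_univ, if_true]

lemma einsteinE_sigmaDiag_iff {n : ℕ} {c : Fin n → Fin n → Fin n → ℝ} {σ : Equiv.Perm (Fin n)}
    {g : Fin n → ℝ} {X : Fin n → Fin n → Fin n → ℝ} (hc : IsNiceNilpotent c)
    (hσ : IsDiagramInvolution c σ) (hg : ∀ i, g i ≠ 0) (hgσ : ∀ i, g (σ i) = g i)
    (hX0 : ∀ i j k : Fin n, ¬(i < j ∧ c i j k ≠ 0) → X i j k = 0)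
    (hX : ∀ i j k : Fin n, i < j → c i j k ≠ 0 →
      X i j k * (g i * g j) = c i j k * c (σ i) (σ j) (σ k) * g k) :
    EinsteinE c (sigmaDiag σ g) ↔
      ∀ h : Fin n, ∑ i, ∑ j, ∑ k, X i j k * ((rootRow i j k h : ℤ) : ℝ) = 1 := by
  have diag_entry : ∀ h : Fin n,
      1/4 * ∑ i, ∑ l, ricciCoeff c σ g i l h - 1/2 * ∑ j, ∑ i, ricciCoeff c σ g h j i =
        1/2 * ∑ i, ∑ j, ∑ k, X i j k * ((rootRow i j k h : ℤ) : ℝ) := fun h => by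
    simp only [ricciCoeff_eq_add_swap hX0 hX hc hg, Finset.sum_add_distrib, sum_mul_rootRow]
    rw [Finset.sum_comm (f := fun i l => X l i h)]
    ring
  simp only [EinsteinE, ric_sigmaDiag hc hσ hg hgσ, diag_entry, Matrix.smul_one_eq_diagonal,
    Matrix.diagonal_injective.eq_iff, funext_iff]
  exact forall_congr' fun _ => by constructor <;> intro h <;> linarith

/-- Theorem (σ-diagonal Einstein metrics): a nice nilpotent Lie algebra admits a
σ-diagonal metric satisfying (E) `ric = ½ id` iff there are `X = (x_I)` and nonzero
`g₁,…,gₙ` with (i) `M_Δᵀ X = (1,…,1)`, (ii) `x_I/(c_I * c̃_I) = g_k/(g_i * g_j)` for all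
`I = {{i,j},k} ∈ I_Δ`, and (iii) `g ∘ σ = g`.  Moreover, whenever (i)–(iii) hold,
the metric `∑ᵢ gᵢ eⁱ ⊗ e^(σ i)` itself satisfies (E). -/
theorem sigmaDiagonal_einstein_iff
    (n : ℕ) (c : Fin n → Fin n → Fin n → ℝ) (hc : IsNiceNilpotent c)
    (σ : Equiv.Perm (Fin n)) (hσ : IsDiagramInvolution c σ) :
    ((∃ gv : Fin n → ℝ, (∀ i, gv i ≠ 0) ∧ (∀ i, gv (σ i) = gv i) ∧
        EinsteinE c (sigmaDiag σ gv)) ↔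
      (∃ (X : Fin n → Fin n → Fin n → ℝ) (gv : Fin n → ℝ),
        (∀ i j k : Fin n, ¬(i < j ∧ c i j k ≠ 0) → X i j k = 0) ∧
        (∀ h : Fin n, (∑ i, ∑ j, ∑ k, X i j k * ((rootRow i j k h : ℤ) : ℝ)) = 1) ∧
        (∀ i, gv i ≠ 0) ∧
        (∀ i j k : Fin n, i < j → c i j k ≠ 0 →
          X i j k * (gv i * gv j) = c i j k * c (σ i) (σ j) (σ k) * gv k) ∧
        (∀ i, gv (σ i) = gv i))) ∧
    (∀ (X : Fin n → Fin n → Fin n → ℝ) (gv : Fin n → ℝ),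
        (∀ i j k : Fin n, ¬(i < j ∧ c i j k ≠ 0) → X i j k = 0) →
        (∀ h : Fin n, (∑ i, ∑ j, ∑ k, X i j k * ((rootRow i j k h : ℤ) : ℝ)) = 1) →
        (∀ i, gv i ≠ 0) →
        (∀ i j k : Fin n, i < j → c i j k ≠ 0 →
          X i j k * (gv i * gv j) = c i j k * c (σ i) (σ j) (σ k) * gv k) →
        (∀ i, gv (σ i) = gv i) →
        EinsteinE c (sigmaDiag σ gv)) := by
  refine ⟨⟨fun ⟨g, hg, hgσ, hE⟩ => ?_, fun ⟨X, g, hX0, hM, hg, hX, hgσ⟩ => ?_⟩,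
    fun X g hX0 hM hg hX hgσ => (einsteinE_sigmaDiag_iff hc hσ hg hgσ hX0 hX).mpr hM⟩
  · let X : Fin n → Fin n → Fin n → ℝ := fun i j k =>
      if i < j ∧ c i j k ≠ 0 then ricciCoeff c σ g i j k else 0
    have hX0 : ∀ i j k, ¬(i < j ∧ c i j k ≠ 0) → X i j k = 0 := fun i j k h => if_neg h
    have hX : ∀ i j k, i < j → c i j k ≠ 0 →
        X i j k * (g i * g j) = c i j k * c (σ i) (σ j) (σ k) * g k := fun i j k hij hcz => by
      simp only [X, if_pos (And.intro hij hcz), ricciCoeff]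
      exact div_mul_cancel₀ _ (mul_ne_zero (hg i) (hg j))
    exact ⟨X, g, hX0, (einsteinE_sigmaDiag_iff hc hσ hg hgσ hX0 hX).mp hE, hg, hX, hgσ⟩
  · exact ⟨g, hg, hgσ, (einsteinE_sigmaDiag_iff hc hσ hg hgσ hX0 hX).mpr hM⟩
end

section
/- For every integer n ≥ 8 there exists an n-dimensional real nilpotent Lie algebra 𝔤 admitting a nice basis and a diagonal metric (with respect to that basis) satisfying condition (E) (ric = ½ id); in particular, in every dimension n ≥ 8 there exists a nilpotent Lie group with a left-invariant pseudo-Riemannian Einstein metric of nonzero scalar curvature. -/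
/-!
Take structure constants `c i j k = ±√(q i j k)` with `q` a table of natural numbers and the
diagonal metric with entries `ε i = ±1`. Niceness makes the Ricci operator of a diagonal metric
diagonal, and its diagonal entries become integer linear expressions in `q`, so (E) is a finite
integer condition; Jacobi holds as soon as no bracket `[[e i, e j], e k]` with `i, j, k` distinct
is nonzero, and a grading that the bracket raises gives nilpotency. Such tables exist in dimensions
8 to 15, and the orthogonal direct sum of two solutions of (E) is again one, since its Ricci
operator is block diagonal; every `n ≥ 8` is a sum of those dimensions.
-/

open scoped BigOperators

open Finset Matrix

section NiceBasis

variable {n : ℕ} (c : Fin n → Fin n → Fin n → ℝ)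

lemma bracket_bracket_apply (x y z : Fin n → ℝ) (l : Fin n) :
    bracket c (bracket c x y) z l =
      ∑ i, ∑ j, ∑ k, x i * y j * z k * ∑ m, c i j m * c m k l := by
  simp only [bracket, sum_mul, mul_sum]
  refine (sum_congr rfl fun m _ ↦ sum_comm_cycle.symm).trans ?_
  rw [sum_comm]
  refine sum_congr rfl fun i _ ↦ sum_comm_cycle.symm.trans ?_
  exact sum_congr rfl fun j _ ↦ sum_congr rfl fun k _ ↦ sum_congr rfl fun m _ ↦ by ring

lemma jacobi_of_cyclic_sum_eq_zero
    (hc : ∀ i j k l, ∑ m, (c i j m * c m k l + c j k m * c m i l + c k i m * c m j l) = 0)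
    (x y z : Fin n → ℝ) :
    bracket c (bracket c x y) z + bracket c (bracket c y z) x + bracket c (bracket c z x) y =
      0 := by
  funext l
  simp only [Pi.add_apply, Pi.zero_apply, bracket_bracket_apply]
  set T : Fin n → Fin n → Fin n → ℝ := fun i j k ↦ ∑ m, c i j m * c m k l
  have h₂ : ∑ i, ∑ j, ∑ k, y i * z j * x k * T i j k = ∑ i, ∑ j, ∑ k, y j * z k * x i * T j k i :=
    sum_comm_cycle
  have h₃ : ∑ i, ∑ j, ∑ k, z i * x j * y k * T i j k = ∑ i, ∑ j, ∑ k, z k * x i * y j * T k i j :=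
    sum_comm_cycle.symm
  rw [h₂, h₃]
  simp only [← sum_add_distrib]
  refine sum_eq_zero fun i _ ↦ sum_eq_zero fun j _ ↦ sum_eq_zero fun k _ ↦ ?_
  have hT : T i j k + T j k i + T k i j = 0 := by simpa only [T, sum_add_distrib] using hc i j k l
  linear_combination x i * y j * z k * hT

lemma cyclic_sum_eq_zero_of_chain (hskew : ∀ i j k, c i j k = -c j i k)
    (hchain : ∀ i j k m l, c i j m ≠ 0 → c m k l ≠ 0 → k = i ∨ k = j) (i j k l : Fin n) :
    ∑ m, (c i j m * c m k l + c j k m * c m i l + c k i m * c m j l) = 0 := by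
  have hdiag : ∀ i m, c i i m = 0 := fun i m ↦ by linarith [hskew i i m]
  have hprod : ∀ i j k m, k ≠ i → k ≠ j → c i j m * c m k l = 0 := fun i j k m hki hkj ↦ by
    by_contra h
    obtain ⟨h₁, h₂⟩ := mul_ne_zero_iff.1 h
    exact (hchain i j k m l h₁ h₂).elim hki hkj
  refine sum_eq_zero fun m _ ↦ ?_
  by_cases hij : i = j
  · subst hij; rw [hdiag, hskew k i m]; ring
  by_cases hki : k = i
  · subst hki; rw [hdiag, hskew j k m]; ring
  by_cases hkj : k = j
  · subst hkj; rw [hdiag, hskew k i m]; ring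
  rw [hprod i j k m hki hkj, hprod j k i m hij (Ne.symm hki),
    hprod k i j m (Ne.symm hkj) (Ne.symm hij)]
  ring

lemma foldr_bracket_apply_eq_zero (w : Fin n → ℕ) (hw : ∀ i j k, c i j k ≠ 0 → w j < w k)
    (L : List (Fin n → ℝ)) (u : Fin n → ℝ) (k : Fin n) (hk : w k < L.length) :
    L.foldr (bracket c) u k = 0 := by
  induction L generalizing k with
  | nil => simp at hk
  | cons a L ih =>
    simp only [List.foldr_cons, bracket]
    refine sum_eq_zero fun i _ ↦ sum_eq_zero fun j _ ↦ ?_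
    by_cases hc : c i j k = 0
    · rw [hc, mul_zero]
    · have hj := hw i j k hc
      rw [List.length_cons] at hk
      rw [ih j (by omega), mul_zero, zero_mul]

lemma exists_foldr_bracket_eq_zero (w : Fin n → ℕ) (hw : ∀ i j k, c i j k ≠ 0 → w j < w k) :
    ∃ N : ℕ, ∀ (v : Fin N → Fin n → ℝ) (u : Fin n → ℝ), (List.ofFn v).foldr (bracket c) u = 0 :=
  ⟨univ.sup w + 1, fun v u ↦ funext fun k ↦
    foldr_bracket_apply_eq_zero c w hw _ u k
      (by simpa using Nat.lt_succ_of_le (le_sup (mem_univ k)))⟩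

lemma inv_diagonal_of_ne_zero (g : Fin n → ℝ) (hg : ∀ i, g i ≠ 0) :
    (diagonal g)⁻¹ = diagonal g⁻¹ := by
  refine inv_eq_left_inv ?_
  rw [diagonal_mul_diagonal, ← diagonal_one]
  exact congrArg diagonal (funext fun i ↦ inv_mul_cancel₀ (hg i))

lemma Ric_diagonal_apply (g : Fin n → ℝ) (hg : ∀ i, g i ≠ 0) (h k : Fin n) :
    Ric c (diagonal g) h k =
      1/4 * ∑ i, ∑ l, (g i)⁻¹ * (g l)⁻¹ * g h * (c i l k * c i l h)
        - 1/2 * ∑ j, ∑ i, (g k)⁻¹ * (g j)⁻¹ * g i * (c h j i * c k j i) := by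
  simp only [Ric, of_apply, inv_diagonal_of_ne_zero g hg, diagonal_apply, Pi.inv_apply]
  simp [sum_ite_eq, mul_comm, mul_left_comm, mul_assoc]

lemma Ric_diagonal_apply_of_ne (hc : IsNiceNilpotent c) (g : Fin n → ℝ) (hg : ∀ i, g i ≠ 0)
    {h k : Fin n} (hhk : h ≠ k) : Ric c (diagonal g) h k = 0 := by
  have h₁ : ∀ i l, c i l k * c i l h = 0 := fun i l ↦ by
    by_contra hne
    obtain ⟨hk, hh⟩ := mul_ne_zero_iff.1 hne
    exact hhk (hc.nice_k i l h k hh hk)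
  have h₂ : ∀ j i, c h j i * c k j i = 0 := fun j i ↦ by
    by_contra hne
    obtain ⟨hh, hk⟩ := mul_ne_zero_iff.1 hne
    rw [hc.skew] at hh hk
    exact hhk (hc.nice_j j h k i (neg_ne_zero.1 hh) (neg_ne_zero.1 hk))
  simp [Ric_diagonal_apply c g hg, h₁, h₂]

end NiceBasis

section Tables

variable {ι κ : Type*}

def symmetrize (q : ι → ι → ι → ℕ) (i j k : ι) : ℕ := q i j k + q j i k

def blockSum (q₁ : ι → ι → ι → ℕ) (q₂ : κ → κ → κ → ℕ) : ι ⊕ κ → ι ⊕ κ → ι ⊕ κ → ℕ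
  | .inl i, .inl j, .inl k => q₁ i j k
  | .inr i, .inr j, .inr k => q₂ i j k
  | _, _, _ => 0

lemma symmetrize_blockSum (q₁ : ι → ι → ι → ℕ) (q₂ : κ → κ → κ → ℕ) :
    symmetrize (blockSum q₁ q₂) = blockSum (symmetrize q₁) (symmetrize q₂) := by
  funext a b c
  rcases a with a | a <;> rcases b with b | b <;> rcases c with c | c <;> rfl

end Tables

/-- Integer data for a nice Lie algebra with structure constants
`c i j k = √(q i j k) - √(q j i k)`, so that `c i j k ^ 2 = symmetrize q i j k` by `oriented`,
and the metric `∑ ε i • eⁱ ⊗ eⁱ`; `einstein h` is `4` times the entry `(h, h)` of (E). -/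
structure EinsteinTable (ι : Type*) [Fintype ι] where
  q : ι → ι → ι → ℕ
  ε : ι → ℤ
  w : ι → ℕ
  oriented : ∀ i j k, q i j k = 0 ∨ q j i k = 0
  nice_k : ∀ i j k, symmetrize q i j k ≠ 0 → ∀ k', symmetrize q i j k' ≠ 0 → k = k'
  nice_j : ∀ i j k, symmetrize q i j k ≠ 0 → ∀ j', symmetrize q i j' k ≠ 0 → j = j'
  chain : ∀ m k l, symmetrize q m k l ≠ 0 → ∀ i j, symmetrize q i j m ≠ 0 → k = i ∨ k = j
  weight_lt : ∀ i j k, symmetrize q i j k ≠ 0 → w j < w k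
  sign : ∀ i, ε i = 1 ∨ ε i = -1
  einstein : ∀ h, ∑ i, ∑ l, ε i * ε l * ε h * symmetrize q i l h
    - 2 * ∑ j, ∑ i, ε h * ε j * ε i * symmetrize q h j i = 2

namespace EinsteinTable

section Operations

variable {ι κ : Type*} [Fintype ι] [Fintype κ]

def sum (T₁ : EinsteinTable ι) (T₂ : EinsteinTable κ) : EinsteinTable (ι ⊕ κ) where
  q := blockSum T₁.q T₂.q
  ε := Sum.elim T₁.ε T₂.ε
  w := Sum.elim T₁.w T₂.w
  oriented := by
    rintro (i | i) (j | j) (k | k) <;> simp [blockSum, T₁.oriented, T₂.oriented]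
  nice_k := by
    rw [symmetrize_blockSum]
    rintro (i | i) (j | j) (k | k) h (k' | k') h' <;> simp_all [blockSum]
    exacts [T₁.nice_k _ _ _ h _ h', T₂.nice_k _ _ _ h _ h']
  nice_j := by
    rw [symmetrize_blockSum]
    rintro (i | i) (j | j) (k | k) h (j' | j') h' <;> simp_all [blockSum]
    exacts [T₁.nice_j _ _ _ h _ h', T₂.nice_j _ _ _ h _ h']
  chain := by
    rw [symmetrize_blockSum]
    rintro (m | m) (k | k) (l | l) h (i | i) (j | j) h' <;> simp_all [blockSum]
    exacts [T₁.chain _ _ _ h _ _ h', T₂.chain _ _ _ h _ _ h']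
  weight_lt := by
    rw [symmetrize_blockSum]
    rintro (i | i) (j | j) (k | k) h <;> simp_all [blockSum]
    exacts [T₁.weight_lt _ _ _ h, T₂.weight_lt _ _ _ h]
  sign := by
    rintro (i | i)
    exacts [T₁.sign i, T₂.sign i]
  einstein := by
    rw [symmetrize_blockSum]
    rintro (h | h)
    · simpa [Fintype.sum_sum_type, blockSum] using T₁.einstein h
    · simpa [Fintype.sum_sum_type, blockSum] using T₂.einstein h

def reindex (e : ι ≃ κ) (T : EinsteinTable ι) : EinsteinTable κ where
  q a b c := T.q (e.symm a) (e.symm b) (e.symm c)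
  ε := T.ε ∘ e.symm
  w := T.w ∘ e.symm
  oriented _ _ _ := T.oriented _ _ _
  nice_k _ _ _ h _ h' := e.symm.injective (T.nice_k _ _ _ h _ h')
  nice_j _ _ _ h _ h' := e.symm.injective (T.nice_j _ _ _ h _ h')
  chain _ _ _ h _ _ h' := (T.chain _ _ _ h _ _ h').imp (e.symm.injective ·) (e.symm.injective ·)
  weight_lt _ _ _ h := T.weight_lt _ _ _ h
  sign _ := T.sign _
  einstein h := by
    convert T.einstein (e.symm h) using 4 <;> first
      | rfl
      | exact Fintype.sum_equiv e.symm _ _ fun _ ↦ Fintype.sum_equiv e.symm _ _ fun _ ↦ rfl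

end Operations

section StructureConstants

variable {ι : Type*} [Fintype ι] (T : EinsteinTable ι)

noncomputable def structureConstants (i j k : ι) : ℝ := √(T.q i j k) - √(T.q j i k)

lemma structureConstants_skew (i j k : ι) :
    T.structureConstants i j k = -T.structureConstants j i k :=
  (neg_sub _ _).symm

lemma structureConstants_mul_self (i j k : ι) :
    T.structureConstants i j k * T.structureConstants i j k = symmetrize T.q i j k := by
  rcases T.oriented i j k with h | h <;>
    simp [structureConstants, symmetrize, h, Real.mul_self_sqrt (Nat.cast_nonneg _)]

lemma structureConstants_ne_zero_iff {i j k : ι} :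
    T.structureConstants i j k ≠ 0 ↔ symmetrize T.q i j k ≠ 0 := by
  rw [← mul_self_ne_zero, structureConstants_mul_self, Nat.cast_ne_zero]

lemma inv_ε (i : ι) : (T.ε i : ℝ)⁻¹ = T.ε i := by
  rcases T.sign i with h | h <;> simp [h]

lemma ε_ne_zero (i : ι) : (T.ε i : ℝ) ≠ 0 := by
  rcases T.sign i with h | h <;> simp [h]

end StructureConstants

section Realization

variable {n : ℕ} (T : EinsteinTable (Fin n))

theorem isNiceNilpotent : IsNiceNilpotent T.structureConstants where
  skew := T.structureConstants_skew
  jacobi := jacobi_of_cyclic_sum_eq_zero _ <|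
    cyclic_sum_eq_zero_of_chain _ T.structureConstants_skew fun i j k m l h h' ↦
      T.chain m k l (T.structureConstants_ne_zero_iff.1 h') i j
        (T.structureConstants_ne_zero_iff.1 h)
  nilpotent := exists_foldr_bracket_eq_zero _ T.w
    fun i j k h ↦ T.weight_lt i j k (T.structureConstants_ne_zero_iff.1 h)
  nice_k i j k k' h h' := T.nice_k i j k (T.structureConstants_ne_zero_iff.1 h) k'
    (T.structureConstants_ne_zero_iff.1 h')
  nice_j i j j' k h h' := T.nice_j i j k (T.structureConstants_ne_zero_iff.1 h) j'
    (T.structureConstants_ne_zero_iff.1 h')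

lemma Ric_diagonal_apply_self (h : Fin n) :
    Ric T.structureConstants (diagonal fun i ↦ (T.ε i : ℝ)) h h =
      1/4 * ((∑ i, ∑ l, T.ε i * T.ε l * T.ε h * symmetrize T.q i l h
        - 2 * ∑ j, ∑ i, T.ε h * T.ε j * T.ε i * symmetrize T.q h j i : ℤ) : ℝ) := by
  rw [Ric_diagonal_apply _ _ T.ε_ne_zero]
  simp only [inv_ε, structureConstants_mul_self]
  push_cast
  ring

theorem einsteinE : EinsteinE T.structureConstants (diagonal fun i ↦ (T.ε i : ℝ)) := by
  ext h k
  rcases eq_or_ne h k with rfl | hhk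
  · rw [Ric_diagonal_apply_self, T.einstein]
    norm_num
  · rw [Ric_diagonal_apply_of_ne _ T.isNiceNilpotent _ T.ε_ne_zero hhk]
    simp [hhk]

end Realization

def fin8 : EinsteinTable (Fin 8) := by
  refine ⟨fun i j k ↦
    match i.val, j.val, k.val with
      | 3, 5, 6 => 3
      | 0, 2, 1 => 5
      | 0, 1, 4 => 3
      | 3, 7, 5 => 5
      | 2, 3, 4 => 7
      | 1, 2, 6 => 3
      | 0, 7, 6 => 7
      | 5, 7, 4 => 3
      | _, _, _ => 0,
    ![1, -1, 1, 1, 1, -1, 1, 1],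
    ![1, 2, 1, 1, 3, 2, 3, 1],
    ?_, ?_, ?_, ?_, ?_, ?_, ?_⟩ <;> decide

def fin9 : EinsteinTable (Fin 9) := by
  refine ⟨fun i j k ↦
    match i.val, j.val, k.val with
      | 0, 8, 6 => 18
      | 5, 8, 7 => 2
      | 0, 4, 1 => 12
      | 4, 5, 6 => 17
      | 2, 8, 3 => 21
      | 2, 4, 7 => 20
      | 0, 5, 3 => 14
      | 1, 4, 3 => 8
      | 0, 1, 7 => 21
      | _, _, _ => 0,
    ![-1, 1, 1, 1, 1, -1, 1, 1, -1],
    ![1, 2, 1, 3, 1, 1, 2, 3, 1],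
    ?_, ?_, ?_, ?_, ?_, ?_, ?_⟩ <;> decide

def fin10 : EinsteinTable (Fin 10) := by
  refine ⟨fun i j k ↦
    match i.val, j.val, k.val with
      | 0, 1, 3 => 3
      | 1, 2, 9 => 12
      | 6, 8, 4 => 2
      | 4, 8, 9 => 3
      | 0, 5, 9 => 16
      | 5, 6, 3 => 8
      | 5, 8, 6 => 9
      | 0, 2, 1 => 14
      | 2, 7, 3 => 12
      | 2, 8, 7 => 13
      | _, _, _ => 0,
    ![1, 1, -1, -1, 1, 1, 1, 1, -1, 1],
    ![1, 2, 1, 3, 3, 1, 2, 2, 1, 4],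
    ?_, ?_, ?_, ?_, ?_, ?_, ?_⟩ <;> decide

def fin11 : EinsteinTable (Fin 11) := by
  refine ⟨fun i j k ↦
    match i.val, j.val, k.val with
      | 8, 10, 6 => 5
      | 3, 8, 0 => 7
      | 8, 9, 2 => 8
      | 1, 8, 5 => 6
      | 9, 10, 5 => 9
      | 2, 8, 1 => 5
      | 3, 4, 5 => 2
      | 7, 10, 0 => 8
      | 2, 9, 6 => 4
      | 4, 8, 3 => 6
      | 4, 9, 0 => 2
      | 4, 10, 7 => 7
      | _, _, _ => 0,
    ![1, 1, 1, -1, 1, 1, -1, -1, -1, 1, 1],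
    ![3, 3, 2, 2, 1, 4, 3, 2, 1, 1, 1],
    ?_, ?_, ?_, ?_, ?_, ?_, ?_⟩ <;> decide

def fin12 : EinsteinTable (Fin 12) := by
  refine ⟨fun i j k ↦
    match i.val, j.val, k.val with
      | 0, 7, 1 => 8
      | 5, 11, 8 => 9
      | 8, 11, 1 => 4
      | 4, 9, 2 => 15
      | 6, 7, 3 => 16
      | 5, 8, 3 => 6
      | 2, 9, 1 => 9
      | 5, 9, 10 => 10
      | 7, 9, 0 => 21
      | 7, 11, 10 => 12
      | 0, 9, 3 => 14
      | 2, 4, 3 => 5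
      | 4, 6, 10 => 21
      | 5, 6, 1 => 4
      | _, _, _ => 0,
    ![-1, -1, 1, -1, -1, -1, 1, -1, -1, -1, 1, -1],
    ![2, 3, 2, 3, 1, 1, 1, 1, 2, 1, 2, 1],
    ?_, ?_, ?_, ?_, ?_, ?_, ?_⟩ <;> decide

def fin13 : EinsteinTable (Fin 13) := by
  refine ⟨fun i j k ↦
    match i.val, j.val, k.val with
      | 0, 2, 3 => 43
      | 5, 10, 11 => 12
      | 0, 1, 2 => 23
      | 5, 6, 4 => 36
      | 10, 11, 3 => 13
      | 7, 10, 9 => 56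
      | 1, 2, 9 => 21
      | 7, 12, 3 => 29
      | 5, 7, 12 => 28
      | 0, 6, 9 => 36
      | 0, 10, 4 => 32
      | 1, 8, 4 => 3
      | 5, 8, 9 => 2
      | 0, 5, 6 => 1
      | _, _, _ => 0,
    ![1, 1, 1, 1, 1, 1, 1, 1, -1, -1, -1, 1, -1],
    ![1, 1, 2, 3, 3, 1, 2, 1, 1, 3, 1, 2, 2],
    ?_, ?_, ?_, ?_, ?_, ?_, ?_⟩ <;> decide

def fin14 : EinsteinTable (Fin 14) := by
  refine ⟨fun i j k ↦
    match i.val, j.val, k.val with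
      | 0, 2, 11 => 15
      | 0, 5, 12 => 13
      | 6, 7, 13 => 11
      | 5, 10, 13 => 14
      | 4, 5, 8 => 3
      | 1, 2, 9 => 2
      | 5, 12, 11 => 12
      | 2, 4, 3 => 12
      | 2, 7, 6 => 6
      | 1, 10, 8 => 6
      | 1, 5, 3 => 7
      | 4, 10, 11 => 2
      | 4, 7, 9 => 10
      | 0, 12, 13 => 2
      | 0, 7, 3 => 6
      | 2, 6, 8 => 4
      | 0, 10, 9 => 7
      | _, _, _ => 0,
    ![1, 1, 1, 1, -1, 1, -1, 1, -1, -1, 1, 1, -1, 1],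
    ![1, 1, 1, 2, 1, 1, 2, 1, 3, 2, 1, 3, 2, 3],
    ?_, ?_, ?_, ?_, ?_, ?_, ?_⟩ <;> decide

def fin15 : EinsteinTable (Fin 15) := by
  refine ⟨fun i j k ↦
    match i.val, j.val, k.val with
      | 12, 14, 0 => 2
      | 1, 12, 13 => 6
      | 1, 2, 4 => 14
      | 6, 9, 8 => 10
      | 9, 12, 4 => 15
      | 3, 10, 13 => 7
      | 2, 14, 13 => 1
      | 1, 10, 3 => 6
      | 5, 6, 13 => 15
      | 6, 7, 4 => 4
      | 1, 3, 11 => 14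
      | 1, 6, 0 => 1
      | 7, 12, 8 => 9
      | 2, 6, 5 => 14
      | 6, 12, 11 => 15
      | 10, 14, 4 => 2
      | 7, 9, 13 => 4
      | _, _, _ => 0,
    ![1, -1, 1, -1, -1, -1, 1, -1, -1, -1, -1, -1, -1, 1, -1],
    ![2, 1, 1, 2, 2, 2, 1, 1, 2, 1, 1, 3, 1, 3, 1],
    ?_, ?_, ?_, ?_, ?_, ?_, ?_⟩ <;> decide

theorem nonempty_fin {n : ℕ} (hn : 8 ≤ n) : Nonempty (EinsteinTable (Fin n)) := by
  induction n using Nat.strong_induction_on with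
  | _ n ih =>
    by_cases hlt : n < 16
    · interval_cases n
      exacts [⟨fin8⟩, ⟨fin9⟩, ⟨fin10⟩, ⟨fin11⟩, ⟨fin12⟩, ⟨fin13⟩, ⟨fin14⟩, ⟨fin15⟩]
    · obtain ⟨T⟩ := ih (n - 8) (by omega) (by omega)
      exact ⟨(T.sum fin8).reindex (finSumFinEquiv.trans (finCongr (by omega)))⟩

end EinsteinTable

/-- In every dimension `n ≥ 8` there is a nilpotent Lie algebra with a nice basis and a
diagonal metric satisfying (E) `ric = ½ id`; equivalently, a nilpotent Lie group with a
left-invariant pseudo-Riemannian Einstein metric of nonzero scalar curvature. -/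
theorem exists_einstein_nilpotent_in_all_dimensions :
    ∀ n : ℕ, 8 ≤ n → ∃ c : Fin n → Fin n → Fin n → ℝ,
      IsNiceNilpotent c ∧
      ∃ gv : Fin n → ℝ, (∀ i, gv i ≠ 0) ∧ EinsteinE c (Matrix.diagonal gv) := by
  intro n hn
  obtain ⟨T⟩ := EinsteinTable.nonempty_fin hn
  exact ⟨T.structureConstants, T.isNiceNilpotent, _, T.ε_ne_zero, T.einsteinE⟩
end

section
/- Let 𝔤 be an n-dimensional real nilpotent Lie algebra with a nice basis e₁,…,eₙ whose mod-2 root matrix M_{Δ,2} is surjective. Suppose i₀ < j₀ are indices with [e_{i₀}, e_{j₀}] = 0 and such that the 2-form ω = e^{i₀} ∧ e^{j₀} is closed, i.e. ω([x,y],z) + ω([y,z],x) + ω([z,x],y) = 0 for all x,y,z ∈ 𝔤. Then the central extension 𝔥 = 𝔤 ⊕ ℝ with bracket [(x,s),(y,t)] = ([x,y], ω(x,y)) is a nilpotent Lie algebra, the basis e₁,…,eₙ,e_{n+1} = (0,1) is a nice basis of 𝔥, and the mod-2 root matrix of 𝔥 is surjective. -/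
open scoped BigOperators

/-- Structure constants of the one-bracket central extension `𝔥 = 𝔤 ⊕ ℝ` with
`[(x,s),(y,t)] = ([x,y], ω(x,y))`, `ω = e^{i₀} ∧ e^{j₀}`, in the extended basis
`e₁, …, eₙ, e_{n+1}`. -/
def extC {n : ℕ} (c : Fin n → Fin n → Fin n → ℝ) (i₀ j₀ : Fin n) :
    Fin (n+1) → Fin (n+1) → Fin (n+1) → ℝ := fun i j k =>
  if hi : (i : ℕ) < n then
    if hj : (j : ℕ) < n then
      if hk : (k : ℕ) < n then c ⟨(i : ℕ), hi⟩ ⟨(j : ℕ), hj⟩ ⟨(k : ℕ), hk⟩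
      else if (i : ℕ) = (i₀ : ℕ) ∧ (j : ℕ) = (j₀ : ℕ) then 1
      else if (i : ℕ) = (j₀ : ℕ) ∧ (j : ℕ) = (i₀ : ℕ) then -1
      else 0
    else 0
  else 0

/-!
In the extended basis the brackets of `𝔤` are unchanged and the only new bracket is
`[e_{i₀}, e_{j₀}] = e_{n+1}`; since `[e_{i₀}, e_{j₀}] = 0` in `𝔤`, the basis stays nice. On the
first `n` coordinates the Jacobi identity of `𝔥` is that of `𝔤`, and on the new one it is the
closedness of `ω`. Since `e_{n+1}` is central and `𝔥 / ℝ e_{n+1} = 𝔤`, one bracket more than for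
`𝔤` kills every iterated bracket in `𝔥`. Finally, the root matrix gains the single row
`-e^{i₀} - e^{j₀} + e^{n+1}`, the only one involving the new coordinate, so a preimage mod 2 is
obtained by extending one for `𝔤` by a suitable last entry.
-/

/-- `ω = e^{i₀} ∧ e^{j₀}`. -/
def wedge {n : ℕ} (i₀ j₀ : Fin n) (x y : Fin n → ℝ) : ℝ :=
  x i₀ * y j₀ - x j₀ * y i₀

lemma sum_rootRow2_mul {n : ℕ} (i j k : Fin n) (s : Fin n → ZMod 2) :
    ∑ h, rootRow2 i j k h * s h = s k - s i - s j := by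
  simp only [rootRow2, rootRow]
  push_cast
  simp [sub_mul, ite_mul, Finset.sum_sub_distrib]

lemma bracket_zero_right {n : ℕ} (c : Fin n → Fin n → Fin n → ℝ) (x : Fin n → ℝ) :
    bracket c x 0 = 0 := by
  funext k; simp [bracket]

namespace extC

variable {n : ℕ} {c : Fin n → Fin n → Fin n → ℝ} {i₀ j₀ : Fin n}

@[simp]
lemma castSucc_castSucc_castSucc (i j k : Fin n) :
    extC c i₀ j₀ i.castSucc j.castSucc k.castSucc = c i j k := by
  simp [extC]

@[simp]
lemma last_left (j k : Fin (n + 1)) : extC c i₀ j₀ (Fin.last n) j k = 0 := by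
  simp [extC]

@[simp]
lemma last_right (i k : Fin (n + 1)) : extC c i₀ j₀ i (Fin.last n) k = 0 := by
  simp [extC]

@[simp]
lemma castSucc_castSucc_last (i j : Fin n) :
    extC c i₀ j₀ i.castSucc j.castSucc (Fin.last n) =
      if i = i₀ ∧ j = j₀ then 1 else if i = j₀ ∧ j = i₀ then -1 else 0 := by
  simp [extC, Fin.val_eq_val]

lemma castSucc_castSucc_last_ne_zero {i j : Fin n}
    (h : extC c i₀ j₀ i.castSucc j.castSucc (Fin.last n) ≠ 0) :
    (i = i₀ ∧ j = j₀) ∨ (i = j₀ ∧ j = i₀) := by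
  rw [castSucc_castSucc_last] at h
  split_ifs at h <;> simp_all

lemma bracket_eq_snoc (hne : i₀ ≠ j₀) (x y : Fin (n + 1) → ℝ) :
    bracket (extC c i₀ j₀) x y =
      Fin.snoc (bracket c (Fin.init x) (Fin.init y)) (wedge i₀ j₀ (Fin.init x) (Fin.init y)) := by
  funext k
  induction k using Fin.lastCases with
  | last =>
    simp only [bracket, Fin.sum_univ_castSucc, last_left, last_right, castSucc_castSucc_last,
      Fin.snoc_last, wedge, Fin.init, mul_zero, Finset.sum_const_zero, add_zero]
    have hcoeff : ∀ i j : Fin n,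
        (if i = i₀ ∧ j = j₀ then 1 else if i = j₀ ∧ j = i₀ then -1 else 0 : ℝ) =
          (if i = i₀ then 1 else 0) * (if j = j₀ then 1 else 0)
            - (if i = j₀ then 1 else 0) * (if j = i₀ then 1 else 0) := by
      intro i j
      by_cases hi : i = i₀ <;> by_cases hj : j = i₀ <;> by_cases hi' : i = j₀ <;> simp_all
    simp [hcoeff, mul_sub, mul_ite, Finset.sum_sub_distrib]
  | cast k =>
    simp [bracket, Fin.sum_univ_castSucc, Fin.init]

lemma init_foldr_bracket (hne : i₀ ≠ j₀) (l : List (Fin (n + 1) → ℝ)) (w : Fin (n + 1) → ℝ) :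
    Fin.init (l.foldr (bracket (extC c i₀ j₀)) w) =
      (l.map Fin.init).foldr (bracket c) (Fin.init w) := by
  induction l with
  | nil => rfl
  | cons a l ih =>
    simp only [List.foldr_cons, List.map_cons, bracket_eq_snoc hne, Fin.init_snoc, ih]

lemma nilpotent (hne : i₀ ≠ j₀) {N : ℕ}
    (hN : ∀ (v : Fin N → Fin n → ℝ) (w : Fin n → ℝ), (List.ofFn v).foldr (bracket c) w = 0)
    (v : Fin (N + 1) → Fin (n + 1) → ℝ) (w : Fin (n + 1) → ℝ) :
    (List.ofFn v).foldr (bracket (extC c i₀ j₀)) w = 0 := by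
  have hinit : Fin.init ((List.ofFn fun i => v i.succ).foldr (bracket (extC c i₀ j₀)) w) = 0 := by
    rw [init_foldr_bracket hne, List.map_ofFn]
    exact hN _ _
  rw [List.ofFn_succ, List.foldr_cons, bracket_eq_snoc hne]
  simp only [hinit, bracket_zero_right, wedge, Pi.zero_apply, mul_zero, sub_zero]
  exact Fin.snoc_init_self 0

lemma jacobi (hne : i₀ ≠ j₀)
    (hjac : ∀ x y z : Fin n → ℝ,
      bracket c (bracket c x y) z + bracket c (bracket c y z) x + bracket c (bracket c z x) y = 0)
    (hclosed : ∀ x y z : Fin n → ℝ,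
      (bracket c x y i₀ * z j₀ - bracket c x y j₀ * z i₀) +
      (bracket c y z i₀ * x j₀ - bracket c y z j₀ * x i₀) +
      (bracket c z x i₀ * y j₀ - bracket c z x j₀ * y i₀) = 0)
    (x y z : Fin (n + 1) → ℝ) :
    bracket (extC c i₀ j₀) (bracket (extC c i₀ j₀) x y) z
      + bracket (extC c i₀ j₀) (bracket (extC c i₀ j₀) y z) x
      + bracket (extC c i₀ j₀) (bracket (extC c i₀ j₀) z x) y = 0 := by
  simp only [bracket_eq_snoc hne, Fin.init_snoc]
  funext k
  induction k using Fin.lastCases with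
  | last => simpa [wedge] using hclosed (Fin.init x) (Fin.init y) (Fin.init z)
  | cast k => simpa using congrFun (hjac (Fin.init x) (Fin.init y) (Fin.init z)) k

lemma skew (hne : i₀ ≠ j₀) (hsk : ∀ i j k, c i j k = - c j i k) (i j k : Fin (n + 1)) :
    extC c i₀ j₀ i j k = - extC c i₀ j₀ j i k := by
  induction i using Fin.lastCases with
  | last => simp
  | cast i =>
    induction j using Fin.lastCases with
    | last => simp
    | cast j =>
      induction k using Fin.lastCases with
      | last =>
        by_cases hi : i = i₀ <;> by_cases hj : j = j₀ <;> by_cases hi' : i = j₀ <;>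
          by_cases hj' : j = i₀ <;> simp_all
      | cast k => simpa using hsk i j k

lemma exists_castSucc_of_ne_zero {i j k : Fin (n + 1)} (h : extC c i₀ j₀ i j k ≠ 0) :
    ∃ i' j' : Fin n, i = i'.castSucc ∧ j = j'.castSucc := by
  induction i using Fin.lastCases with
  | last => simp at h
  | cast i =>
    induction j using Fin.lastCases with
    | last => simp at h
    | cast j => exact ⟨i, j, rfl, rfl⟩

lemma nice_k (hsk : ∀ i j k, c i j k = - c j i k) (hzero : ∀ k, c i₀ j₀ k = 0)
    (hk : ∀ i j k k', c i j k ≠ 0 → c i j k' ≠ 0 → k = k') (i j k k' : Fin (n + 1))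
    (h : extC c i₀ j₀ i j k ≠ 0) (h' : extC c i₀ j₀ i j k' ≠ 0) : k = k' := by
  obtain ⟨i, j, rfl, rfl⟩ := exists_castSucc_of_ne_zero h
  -- a bracket with an `e_{n+1}` component is `±[e_{i₀}, e_{j₀}]`, which has none in `𝔤`
  have hpair : extC c i₀ j₀ i.castSucc j.castSucc (Fin.last n) ≠ 0 → ∀ k, c i j k = 0 := by
    intro hlast k
    rcases castSucc_castSucc_last_ne_zero hlast with ⟨rfl, rfl⟩ | ⟨rfl, rfl⟩
    · exact hzero k
    · simp [hsk i j k, hzero]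
  induction k using Fin.lastCases with
  | last =>
    induction k' using Fin.lastCases with
    | last => rfl
    | cast k' => simp [hpair h] at h'
  | cast k =>
    induction k' using Fin.lastCases with
    | last => simp [hpair h'] at h
    | cast k' => simpa using hk i j k k' (by simpa using h) (by simpa using h')

lemma nice_j (hne : i₀ ≠ j₀) (hj : ∀ i j j' k, c i j k ≠ 0 → c i j' k ≠ 0 → j = j')
    (i j j' k : Fin (n + 1))
    (h : extC c i₀ j₀ i j k ≠ 0) (h' : extC c i₀ j₀ i j' k ≠ 0) : j = j' := by
  obtain ⟨i, j, rfl, rfl⟩ := exists_castSucc_of_ne_zero h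
  obtain ⟨-, j', -, rfl⟩ := exists_castSucc_of_ne_zero h'
  induction k using Fin.lastCases with
  | last =>
    rcases castSucc_castSucc_last_ne_zero h with ⟨rfl, rfl⟩ | ⟨rfl, rfl⟩ <;>
      rcases castSucc_castSucc_last_ne_zero h' with ⟨hi, rfl⟩ | ⟨hi, rfl⟩ <;>
      simp_all
  | cast k => simpa using hj i j j' k (by simpa using h) (by simpa using h')

lemma isNiceNilpotent (hc : IsNiceNilpotent c) (hne : i₀ ≠ j₀) (hzero : ∀ k, c i₀ j₀ k = 0)
    (hclosed : ∀ x y z : Fin n → ℝ,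
      (bracket c x y i₀ * z j₀ - bracket c x y j₀ * z i₀) +
      (bracket c y z i₀ * x j₀ - bracket c y z j₀ * x i₀) +
      (bracket c z x i₀ * y j₀ - bracket c z x j₀ * y i₀) = 0) :
    IsNiceNilpotent (extC c i₀ j₀) where
  skew := skew hne hc.skew
  jacobi := jacobi hne hc.jacobi hclosed
  nilpotent :=
    let ⟨N, hN⟩ := hc.nilpotent
    ⟨N + 1, nilpotent hne hN⟩
  nice_k := nice_k hc.skew hzero hc.nice_k
  nice_j := nice_j hne hc.nice_j

lemma surjectiveType (hsurj : SurjectiveType c) (hlt : i₀ < j₀) :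
    SurjectiveType (extC c i₀ j₀) := by
  intro y
  obtain ⟨s, hs⟩ := hsurj fun i j k => y i.castSucc j.castSucc k.castSucc
  -- the last entry solves the new row `y = s_{n+1} - s_{i₀} - s_{j₀}`
  refine ⟨Fin.snoc s (y i₀.castSucc j₀.castSucc (Fin.last n) + s i₀ + s j₀), ?_⟩
  intro i j k hij h
  obtain ⟨i, j, rfl, rfl⟩ := exists_castSucc_of_ne_zero h
  rw [sum_rootRow2_mul]
  induction k using Fin.lastCases with
  | last =>
    rcases castSucc_castSucc_last_ne_zero h with ⟨rfl, rfl⟩ | ⟨rfl, rfl⟩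
    · simp only [Fin.snoc_last, Fin.snoc_castSucc]
      ring
    · exact absurd hij (by simpa using hlt.le)
  | cast k =>
    simpa [sum_rootRow2_mul] using hs i j k (by simpa using hij) (by simpa using h)

end extC

/-- One-bracket central extensions of nice nilpotent Lie algebras of surjective type:
if `[e_{i₀}, e_{j₀}] = 0` and the 2-form `ω = e^{i₀} ∧ e^{j₀}` is closed, the central
extension by `ω` is nilpotent, the extended basis is nice, and the new mod 2 root
matrix is again surjective. -/
theorem one_bracket_extension_surjective_type
    (n : ℕ) (c : Fin n → Fin n → Fin n → ℝ) (hc : IsNiceNilpotent c)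
    (hsurj : SurjectiveType c)
    (i₀ j₀ : Fin n) (hlt : i₀ < j₀)
    (hzero : ∀ k, c i₀ j₀ k = 0)
    (hclosed : ∀ x y z : Fin n → ℝ,
      (bracket c x y i₀ * z j₀ - bracket c x y j₀ * z i₀) +
      (bracket c y z i₀ * x j₀ - bracket c y z j₀ * x i₀) +
      (bracket c z x i₀ * y j₀ - bracket c z x j₀ * y i₀) = 0) :
    IsNiceNilpotent (extC c i₀ j₀) ∧ SurjectiveType (extC c i₀ j₀) :=
  ⟨extC.isNiceNilpotent hc hlt.ne hzero hclosed, extC.surjectiveType hsurj hlt⟩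
end

section
/- Let M be an m×n matrix with integer entries whose reduction modulo 2 is surjective as a linear map (ℤ/2)ⁿ → (ℤ/2)^m. Then the multiplicative map F : (ℝ*)ⁿ → (ℝ*)^m defined by F(g)_I = ∏_{j=1}^{n} g_j^{M_{Ij}} (integer powers of nonzero reals) is surjective. -/
/-!
Identify `ℝ*` with `ℤ/2 × ℝ` through the sign and `log |·|`; in these coordinates `F` becomes
`M mod 2` on the sign part and `M` on the logarithmic part. Lifting a mod-2 right inverse of `M`
to an integer matrix `U` gives `M U ≡ 1 (mod 2)`, so `det (M U)` is odd, hence nonzero, and `M`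
is surjective over `ℝ` as well. Both parts of `F` are therefore surjective.
-/

open Matrix

section IntMatrix

variable {ι κ : Type*} [Fintype κ] (N : ℕ) {M : Matrix ι κ ℤ}

theorem Matrix.exists_intCast_mulVec_eq_of_surjective
    (h : Function.Surjective (M.map (Int.cast : ℤ → ZMod N)).mulVec) (τ : ι → ZMod N) :
    ∃ σ : κ → ℤ, ∀ i, ((M *ᵥ σ) i : ZMod N) = τ i := by
  obtain ⟨s, rfl⟩ := h τ
  refine ⟨fun j => (s j).cast, fun i => ?_⟩
  simp [mulVec, dotProduct]

variable [Fintype ι] [DecidableEq ι] {K : Type*} [Field K] [CharZero K]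

theorem Matrix.isUnit_map_intCast_of_map_zmod_eq_one [Fact (1 < N)] {A : Matrix ι ι ℤ}
    (h : A.map (Int.cast : ℤ → ZMod N) = 1) : IsUnit (A.map (Int.cast : ℤ → K)) := by
  have hdet : (A.det : ZMod N) = 1 := by rw [Int.cast_det, h, det_one]
  rw [isUnit_iff_isUnit_det, isUnit_iff_ne_zero, ← Int.cast_det, Int.cast_ne_zero]
  rintro h0
  simp [h0] at hdet

theorem Matrix.mulVec_map_intCast_surjective_of_zmod [Fact (1 < N)]
    (h : Function.Surjective (M.map (Int.cast : ℤ → ZMod N)).mulVec) :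
    Function.Surjective (M.map (Int.cast : ℤ → K)).mulVec := by
  obtain ⟨B, hB⟩ := mulVec_surjective_iff_exists_right_inverse.1 h
  set U : Matrix κ ι ℤ := B.map fun b => (b.cast : ℤ)
  have hU : U.map (Int.cast : ℤ → ZMod N) = B := by ext; simp [U]
  have hMU : (M * U).map (Int.cast : ℤ → ZMod N) = 1 :=
    (Matrix.map_mul (f := Int.castRingHom (ZMod N))).trans (hU ▸ hB)
  obtain ⟨C, hC⟩ := isUnit_iff_exists_inv.1 (isUnit_map_intCast_of_map_zmod_eq_one (K := K) N hMU)
  refine mulVec_surjective_iff_exists_right_inverse.2 ⟨U.map (Int.cast : ℤ → K) * C, ?_⟩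
  rw [← Matrix.mul_assoc, ← hC]
  exact congrArg (· * C) (Matrix.map_mul (f := Int.castRingHom K)).symm

end IntMatrix

theorem Real.exp_zpow (x : ℝ) (k : ℤ) : Real.exp x ^ k = Real.exp (k * x) := by
  rw [← Real.rpow_intCast, ← Real.exp_mul, mul_comm]

theorem Finset.prod_zpow_eq_zpow_sum₀ {ι G₀ : Type*} [CommGroupWithZero G₀] (s : Finset ι)
    (f : ι → ℤ) {a : G₀} (ha : a ≠ 0) : ∏ i ∈ s, a ^ f i = a ^ ∑ i ∈ s, f i := by
  induction s using Finset.cons_induction with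
  | empty => simp
  | cons b s hb ih => rw [Finset.sum_cons, Finset.prod_cons, zpow_add₀ ha, ih]

theorem prod_neg_one_zpow_mul_exp_zpow {ι : Type*} [Fintype ι] (σ a : ι → ℤ) (t : ι → ℝ) :
    ∏ j, ((-1 : ℝ) ^ σ j * Real.exp (t j)) ^ a j
      = (-1) ^ (∑ j, a j * σ j) * Real.exp (∑ j, a j * t j) := by
  simp only [mul_zpow, Finset.prod_mul_distrib, ← _root_.zpow_mul, Real.exp_zpow, ← Real.exp_sum,
    Finset.prod_zpow_eq_zpow_sum₀ _ _ (neg_ne_zero.2 (one_ne_zero (α := ℝ))), mul_comm (σ _)]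

theorem neg_one_zpow_mul_abs {x : ℝ} {k : ℤ} (hk : (k : ZMod 2) = if x < 0 then 1 else 0) :
    (-1) ^ k * |x| = x := by
  split_ifs at hk with hx
  · rw [(ZMod.intCast_eq_one_iff_odd.1 hk).neg_one_zpow, abs_of_neg hx, neg_one_mul, neg_neg]
  · rw [(ZMod.intCast_eq_zero_iff_even.1 hk).neg_one_zpow, abs_of_nonneg (not_lt.1 hx), one_mul]

/-- If the mod 2 reduction of an integer matrix `M` is surjective, then the multiplicative
map `F : (ℝ*)ⁿ → (ℝ*)^m`, `F(g)_I = ∏ⱼ gⱼ ^ M_{Ij}`, is surjective. -/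
theorem multiplicative_map_surjective_of_mod_two_surjective
    (m n : ℕ) (M : Matrix (Fin m) (Fin n) ℤ)
    (h2 : Function.Surjective fun s : Fin n → ZMod 2 =>
      (M.map ((↑) : ℤ → ZMod 2)).mulVec s) :
    ∀ y : Fin m → ℝ, (∀ I, y I ≠ 0) →
      ∃ g : Fin n → ℝ, (∀ j, g j ≠ 0) ∧ ∀ I, (∏ j, g j ^ M I j) = y I := by
  intro y hy
  obtain ⟨σ, hσ⟩ := exists_intCast_mulVec_eq_of_surjective 2 h2 fun I => if y I < 0 then 1 else 0
  obtain ⟨t, ht⟩ := mulVec_map_intCast_surjective_of_zmod (K := ℝ) 2 h2 fun I => Real.log |y I|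
  refine ⟨fun j => (-1) ^ σ j * Real.exp (t j),
    fun j => mul_ne_zero (zpow_ne_zero _ (by norm_num)) (Real.exp_pos _).ne', fun I => ?_⟩
  calc (∏ j, ((-1) ^ σ j * Real.exp (t j)) ^ M I j)
      = (-1) ^ (M *ᵥ σ) I * Real.exp ((M.map Int.cast *ᵥ t) I) :=
        prod_neg_one_zpow_mul_exp_zpow σ (M I) t
    _ = (-1) ^ (M *ᵥ σ) I * |y I| := by rw [ht, Real.exp_log (abs_pos.2 (hy I))]
    _ = y I := neg_one_zpow_mul_abs (hσ I)
end

section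
/- Let M be an m×n real matrix each of whose rows sums to −1 (as is the case for the root matrix of a nice nilpotent Lie algebra, whose rows are −eⁱ−eʲ+eᵏ with i, j, k distinct). If X ∈ ℝ^m satisfies Mᵀ X = (1,…,1) ∈ ℝⁿ, then ∑_{I} x_I = −n; in particular, X cannot have all entries positive. Consequently, no nonabelian nice nilpotent Lie algebra admits a positive-definite diagonal metric satisfying condition (E). -/
open scoped BigOperators

/-!
Summing `Mᵀ X = (1,…,1)` over its `n` entries counts every `x_I` with weight equal to the
`I`-th row sum, i.e. `−1`. For the Lie algebra part the same bookkeeping appears as the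
trace of the Ricci operator: for a diagonal metric its diagonal entries are
`¼ ∑ c_{ilk}² g_k/(g_i g_l) − ½ ∑ c_{kji}² g_i/(g_k g_j)`, and summing over `k` gives the
scalar curvature `−¼ ∑ c_{ijk}² g_k/(g_i g_j) ≤ 0`, while `ric = ½ id` has trace `n/2 > 0`.
-/

theorem sum_eq_neg_card_of_sum_row_eq_neg_one {R ι κ : Type*} [CommRing R] [Fintype ι]
    [Fintype κ] {M : Matrix ι κ R} (hrow : ∀ I, ∑ j, M I j = -1) {X : ι → R}
    (hX : ∀ j, ∑ I, M I j * X I = 1) : ∑ I, X I = -(Fintype.card κ : R) := by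
  calc ∑ I, X I = -∑ I, (∑ j, M I j) * X I := by simp [hrow]
    _ = -∑ j, ∑ I, M I j * X I := by simp only [Finset.sum_mul, Finset.sum_comm (γ := ι)]
    _ = -(Fintype.card κ : R) := by simp [hX]

theorem Matrix.inv_diagonal_of_ne_zero {ι K : Type*} [Fintype ι] [DecidableEq ι] [Field K]
    {g : ι → K} (hg : ∀ i, g i ≠ 0) :
    (Matrix.diagonal g)⁻¹ = Matrix.diagonal fun i => (g i)⁻¹ := by
  refine Matrix.inv_eq_right_inv ?_
  rw [Matrix.diagonal_mul_diagonal, ← Matrix.diagonal_one]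
  exact congrArg _ (funext fun i => mul_inv_cancel₀ (hg i))

theorem Ric_diagonal_apply_self {n : ℕ} (c : Fin n → Fin n → Fin n → ℝ) {g : Fin n → ℝ}
    (hg : ∀ i, g i ≠ 0) (k : Fin n) :
    Ric c (Matrix.diagonal g) k k =
      1/4 * ∑ i, ∑ l, (g i)⁻¹ * (g l)⁻¹ * g k * c i l k ^ 2
      - 1/2 * ∑ j, ∑ i, (g k)⁻¹ * (g j)⁻¹ * g i * c k j i ^ 2 := by
  simp [Ric, Matrix.inv_diagonal_of_ne_zero hg, Matrix.diagonal_apply, ite_mul, mul_ite, sq,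
    mul_assoc]

theorem trace_Ric_diagonal {n : ℕ} (c : Fin n → Fin n → Fin n → ℝ) {g : Fin n → ℝ}
    (hg : ∀ i, g i ≠ 0) :
    (Ric c (Matrix.diagonal g)).trace =
      -(1/4) * ∑ i, ∑ j, ∑ k, (g i)⁻¹ * (g j)⁻¹ * g k * c i j k ^ 2 := by
  have hperm : ∑ k, ∑ i, ∑ l, (g i)⁻¹ * (g l)⁻¹ * g k * c i l k ^ 2
      = ∑ i, ∑ j, ∑ k, (g i)⁻¹ * (g j)⁻¹ * g k * c i j k ^ 2 := by
    rw [Finset.sum_comm]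
    exact Finset.sum_congr rfl fun _ _ => Finset.sum_comm
  simp only [Matrix.trace, Matrix.diag, Ric_diagonal_apply_self c hg, Finset.sum_sub_distrib,
    ← Finset.mul_sum, hperm]
  ring

theorem trace_Ric_diagonal_nonpos {n : ℕ} (c : Fin n → Fin n → Fin n → ℝ) {g : Fin n → ℝ}
    (hg : ∀ i, 0 < g i) : (Ric c (Matrix.diagonal g)).trace ≤ 0 := by
  rw [trace_Ric_diagonal c fun i => (hg i).ne']
  have : 0 ≤ ∑ i, ∑ j, ∑ k, (g i)⁻¹ * (g j)⁻¹ * g k * c i j k ^ 2 :=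
    Finset.sum_nonneg fun i _ => Finset.sum_nonneg fun j _ => Finset.sum_nonneg fun k _ =>
      have := hg i; have := hg j; have := hg k; by positivity
  linarith

theorem not_einsteinE_diagonal_of_pos {n : ℕ} (hn : 0 < n) (c : Fin n → Fin n → Fin n → ℝ)
    {g : Fin n → ℝ} (hg : ∀ i, 0 < g i) : ¬ EinsteinE c (Matrix.diagonal g) := by
  intro hE
  have htr := trace_Ric_diagonal_nonpos c hg
  rw [hE, Matrix.trace_smul, Matrix.trace_one, Fintype.card_fin, smul_eq_mul] at htr
  have : (0 : ℝ) < n := by exact_mod_cast hn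
  linarith

/-- If every row of `M` sums to `−1` and `Mᵀ X = (1,…,1)`, then `∑ x_I = −n`, so `X`
cannot have all entries positive; consequently no nonabelian nice nilpotent Lie algebra
admits a positive-definite diagonal metric satisfying (E) `ric = ½ id`. -/
theorem no_positive_solution_and_no_riemannian_einstein
    (m n : ℕ) (M : Matrix (Fin m) (Fin n) ℝ)
    (hrow : ∀ I, (∑ j, M I j) = -1)
    (X : Fin m → ℝ) (hX : ∀ j, (∑ I, M I j * X I) = 1) :
    ((∑ I, X I) = -(n : ℝ) ∧ (0 < n → ¬ ∀ I, 0 < X I)) ∧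
    (∀ (n' : ℕ) (c : Fin n' → Fin n' → Fin n' → ℝ), IsNiceNilpotent c →
      (∃ i j k : Fin n', c i j k ≠ 0) →
      ¬ ∃ gv : Fin n' → ℝ, (∀ i, 0 < gv i) ∧ EinsteinE c (Matrix.diagonal gv)) := by
  have hsum : ∑ I, X I = -(n : ℝ) := by
    simpa using sum_eq_neg_card_of_sum_row_eq_neg_one hrow hX
  refine ⟨⟨hsum, fun hn hpos => ?_⟩, ?_⟩
  · have : (0 : ℝ) < n := by exact_mod_cast hn
    linarith [Finset.sum_nonneg fun I (_ : I ∈ Finset.univ) => (hpos I).le]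
  · rintro n' c - ⟨i, -, -, -⟩ ⟨gv, hgv, hE⟩
    exact not_einsteinE_diagonal_of_pos i.pos c hgv hE
end
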